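/- Let κ ≥ 0 and c > √(1 + κ), and define H as above with these parameters. Then the equation ρ = exp(H(ρ)) has exactly two solutions in (0, ∞): ρ = 1 and a second solution ρ̂ satisfying ρ̂ > c/√(1 + κ). Moreover ρ < exp(H(ρ)) for all ρ ∈ (1, ρ̂) and ρ > exp(H(ρ)) for all ρ ∈ (ρ̂, ∞). -/

import Mathlib

/-- `H(ρ) = (c²/2)·(1 − 1/ρ²) − κ·ln ρ`. -/
noncomputable def Hfun (κ c ρ : ℝ) : ℝ := c ^ 2 / 2 * (1 - 1 / ρ ^ 2) - κ * Real.log ρ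

/-- Auxiliary: `F(ρ) = H(ρ) - ln ρ`. -/
noncomputable def Ffun (κ c ρ : ℝ) : ℝ := c ^ 2 / 2 * (1 - 1 / ρ ^ 2) - (κ + 1) * Real.log ρ

lemma Ffun_hasDerivAt (κ c ρ : ℝ) (hρ : ρ ≠ 0) :
    HasDerivAt (Ffun κ c) ((c ^ 2 - (κ + 1) * ρ ^ 2) / ρ ^ 3) ρ := by
  have h1 : HasDerivAt (fun x : ℝ => 1 - 1 / x ^ 2) (-(-(2 * ρ) / (ρ ^ 2) ^ 2)) ρ := by
    have := ((hasDerivAt_pow 2 ρ).inv (pow_ne_zero 2 hρ)).const_sub 1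
    simpa [one_div, pow_one] using this
  have h2 : HasDerivAt (fun x : ℝ => c ^ 2 / 2 * (1 - 1 / x ^ 2))
      (c ^ 2 / 2 * (-(-(2 * ρ) / (ρ ^ 2) ^ 2))) ρ := h1.const_mul _
  have h3 : HasDerivAt (fun x : ℝ => (κ + 1) * Real.log x) ((κ + 1) * ρ⁻¹) ρ :=
    (Real.hasDerivAt_log hρ).const_mul _
  have h4 := h2.sub h3
  have h5 : HasDerivAt (Ffun κ c) (c ^ 2 / 2 * -(-(2 * ρ) / (ρ ^ 2) ^ 2) - (κ + 1) * ρ⁻¹) ρ := h4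
  convert h5 using 1
  field_simp

theorem stmt5 (κ c : ℝ) (hκ : 0 ≤ κ) (hc : Real.sqrt (1 + κ) < c) :
    ∃ ρhat : ℝ, c / Real.sqrt (1 + κ) < ρhat ∧ ρhat ≠ 1 ∧
      {ρ : ℝ | 0 < ρ ∧ ρ = Real.exp (Hfun κ c ρ)} = {1, ρhat} ∧
      (∀ ρ : ℝ, 1 < ρ → ρ < ρhat → ρ < Real.exp (Hfun κ c ρ)) ∧
      (∀ ρ : ℝ, ρhat < ρ → Real.exp (Hfun κ c ρ) < ρ) := by
  set s := Real.sqrt (1 + κ) with hs_def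
  have hssq : s ^ 2 = 1 + κ := Real.sq_sqrt (by linarith)
  have hs1 : (1 : ℝ) ≤ s := by nlinarith [Real.sqrt_nonneg (1 + κ)]
  have hs0 : (0 : ℝ) < s := by linarith
  have hc1 : (1 : ℝ) < c := lt_of_le_of_lt hs1 hc
  have hc0 : (0 : ℝ) < c := by linarith
  set ρs := c / s with hρs_def
  have hρs1 : (1 : ℝ) < ρs := (one_lt_div hs0).mpr hc
  have hρs0 : (0 : ℝ) < ρs := by linarith
  -- derivative sign
  have hderiv_pos : ∀ ρ ∈ Set.Ioo (0:ℝ) ρs, 0 < (c ^ 2 - (κ + 1) * ρ ^ 2) / ρ ^ 3 := by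
    intro ρ hρ
    have hρ0 := hρ.1
    have h : ρ * s < c := by
      have := hρ.2
      rw [hρs_def, lt_div_iff₀ hs0] at this
      exact this
    have hnum : (κ + 1) * ρ ^ 2 < c ^ 2 := by
      have h2 : (ρ * s) ^ 2 < c ^ 2 := by
        apply pow_lt_pow_left₀ h (by positivity)
        norm_num
      calc (κ + 1) * ρ ^ 2 = (ρ * s) ^ 2 := by rw [mul_pow, hssq]; ring
        _ < c ^ 2 := h2
    have : (0:ℝ) < ρ ^ 3 := by positivity
    exact div_pos (by linarith) this
  have hderiv_neg : ∀ ρ ∈ Set.Ioi ρs, (c ^ 2 - (κ + 1) * ρ ^ 2) / ρ ^ 3 < 0 := by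
    intro ρ hρ
    have hρ0 : (0:ℝ) < ρ := lt_trans hρs0 hρ
    have h : c < ρ * s := by
      have : ρs < ρ := hρ
      rw [hρs_def, div_lt_iff₀ hs0] at this
      exact this
    have hnum : c ^ 2 < (κ + 1) * ρ ^ 2 := by
      have h2 : c ^ 2 < (ρ * s) ^ 2 := by
        apply pow_lt_pow_left₀ h (le_of_lt hc0)
        norm_num
      calc c ^ 2 < (ρ * s) ^ 2 := h2
        _ = (κ + 1) * ρ ^ 2 := by rw [mul_pow, hssq]; ring
    have hρ3 : (0:ℝ) < ρ ^ 3 := by positivity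
    exact div_neg_of_neg_of_pos (by linarith) hρ3
  have hcont : ∀ ρ : ℝ, ρ ≠ 0 → ContinuousAt (Ffun κ c) ρ := fun ρ hρ =>
    (Ffun_hasDerivAt κ c ρ hρ).continuousAt
  -- monotonicity
  have hmono : StrictMonoOn (Ffun κ c) (Set.Ioc 0 ρs) := by
    apply strictMonoOn_of_deriv_pos (convex_Ioc 0 ρs)
    · exact fun ρ hρ => (hcont ρ (ne_of_gt hρ.1)).continuousWithinAt
    · intro ρ hρ
      rw [interior_Ioc] at hρ
      rw [(Ffun_hasDerivAt κ c ρ (ne_of_gt hρ.1)).deriv]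
      exact hderiv_pos ρ hρ
  have hanti : StrictAntiOn (Ffun κ c) (Set.Ici ρs) := by
    apply strictAntiOn_of_deriv_neg (convex_Ici ρs)
    · exact fun ρ hρ => (hcont ρ (ne_of_gt (lt_of_lt_of_le hρs0 hρ))).continuousWithinAt
    · intro ρ hρ
      rw [interior_Ici] at hρ
      rw [(Ffun_hasDerivAt κ c ρ (ne_of_gt (lt_trans hρs0 hρ))).deriv]
      exact hderiv_neg ρ hρ
  have hF1 : Ffun κ c 1 = 0 := by simp [Ffun]
  have h1mem : (1:ℝ) ∈ Set.Ioc (0:ℝ) ρs := ⟨one_pos, le_of_lt hρs1⟩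
  have hρsmem : ρs ∈ Set.Ioc (0:ℝ) ρs := ⟨hρs0, le_refl _⟩
  have hFρs : 0 < Ffun κ c ρs := by
    have := hmono h1mem hρsmem hρs1
    rwa [hF1] at this
  -- large point where F is negative
  set B := max (ρs + 1) (Real.exp (c ^ 2 / (κ + 1))) with hB_def
  have hκ1 : (0:ℝ) < κ + 1 := by linarith
  have hBρs : ρs < B := lt_of_lt_of_le (by linarith) (le_max_left _ _)
  have hB0 : (0:ℝ) < B := lt_trans hρs0 hBρs
  have hBlog : c ^ 2 / (κ + 1) ≤ Real.log B := by
    calc c ^ 2 / (κ + 1) = Real.log (Real.exp (c ^ 2 / (κ + 1))) := (Real.log_exp _).symm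
      _ ≤ Real.log B := Real.log_le_log (Real.exp_pos _) (le_max_right _ _)
  have hFB : Ffun κ c B < 0 := by
    have h1 : (κ + 1) * (c ^ 2 / (κ + 1)) ≤ (κ + 1) * Real.log B :=
      mul_le_mul_of_nonneg_left hBlog (le_of_lt hκ1)
    have h2 : (κ + 1) * (c ^ 2 / (κ + 1)) = c ^ 2 := by field_simp
    have h3 : c ^ 2 / 2 * (1 - 1 / B ^ 2) < c ^ 2 / 2 := by
      have h4 : (0:ℝ) < c ^ 2 / 2 * (1 / B ^ 2) := by positivity
      nlinarith
    have hc2 : (0:ℝ) < c ^ 2 := by positivity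
    rw [Ffun]
    linarith
  -- IVT: find ρhat
  have hcontIcc : ContinuousOn (Ffun κ c) (Set.Icc ρs B) := fun ρ hρ =>
    (hcont ρ (ne_of_gt (lt_of_lt_of_le hρs0 hρ.1))).continuousWithinAt
  have hivt := intermediate_value_Icc' (le_of_lt hBρs) hcontIcc
  have h0mem : (0:ℝ) ∈ Set.Icc (Ffun κ c B) (Ffun κ c ρs) := ⟨le_of_lt hFB, le_of_lt hFρs⟩
  obtain ⟨ρhat, hρhatmem, hFρhat⟩ := hivt h0mem
  have hρhat_gt : ρs < ρhat := by
    rcases lt_or_eq_of_le hρhatmem.1 with h | h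
    · exact h
    · exfalso; rw [← h] at hFρhat; linarith
  have hρhat1 : (1:ℝ) < ρhat := lt_trans hρs1 hρhat_gt
  have hρhat0 : (0:ℝ) < ρhat := by linarith
  -- sign lemmas
  have hFpos : ∀ ρ : ℝ, 1 < ρ → ρ < ρhat → 0 < Ffun κ c ρ := by
    intro ρ h1ρ hρρhat
    rcases le_or_gt ρ ρs with h | h
    · have := hmono h1mem ⟨by linarith, h⟩ h1ρ
      rwa [hF1] at this
    · have := hanti (Set.mem_Ici.mpr (le_of_lt h)) (Set.mem_Ici.mpr (le_of_lt hρhat_gt)) hρρhat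
      rwa [hFρhat] at this
  have hFneg1 : ∀ ρ : ℝ, 0 < ρ → ρ < 1 → Ffun κ c ρ < 0 := by
    intro ρ h0ρ hρ1
    have := hmono ⟨h0ρ, by linarith⟩ h1mem hρ1
    rwa [hF1] at this
  have hFneg2 : ∀ ρ : ℝ, ρhat < ρ → Ffun κ c ρ < 0 := by
    intro ρ h
    have := hanti (Set.mem_Ici.mpr (le_of_lt hρhat_gt))
      (Set.mem_Ici.mpr (by linarith : ρs ≤ ρ)) h
    rwa [hFρhat] at this
  -- translation lemmas
  have hFeq : ∀ ρ : ℝ, 0 < ρ → Ffun κ c ρ = Hfun κ c ρ - Real.log ρ := by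
    intro ρ _; rw [Ffun, Hfun]; ring
  have heq_iff : ∀ ρ : ℝ, 0 < ρ → (ρ = Real.exp (Hfun κ c ρ) ↔ Ffun κ c ρ = 0) := by
    intro ρ hρ
    rw [hFeq ρ hρ, sub_eq_zero]
    constructor
    · intro h
      rw [← Real.log_exp (Hfun κ c ρ), ← h]
    · intro h
      rw [h]
      exact (Real.exp_log hρ).symm
  have hlt_iff : ∀ ρ : ℝ, 0 < ρ → (ρ < Real.exp (Hfun κ c ρ) ↔ 0 < Ffun κ c ρ) := by
    intro ρ hρ
    rw [hFeq ρ hρ, sub_pos]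
    constructor
    · intro h
      rw [← Real.log_exp (Hfun κ c ρ)]
      exact Real.log_lt_log hρ h
    · intro h
      calc ρ = Real.exp (Real.log ρ) := (Real.exp_log hρ).symm
        _ < Real.exp (Hfun κ c ρ) := Real.exp_lt_exp.mpr h
  refine ⟨ρhat, hρhat_gt, ne_of_gt hρhat1, ?_, ?_, ?_⟩
  · ext ρ
    simp only [Set.mem_setOf_eq, Set.mem_insert_iff, Set.mem_singleton_iff]
    constructor
    · rintro ⟨hρ0, heq⟩
      have hFρ := (heq_iff ρ hρ0).mp heq
      rcases lt_trichotomy ρ 1 with h | h | h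
      · exact absurd hFρ (ne_of_lt (hFneg1 ρ hρ0 h))
      · exact Or.inl h
      · rcases lt_trichotomy ρ ρhat with h2 | h2 | h2
        · exact absurd hFρ (ne_of_gt (hFpos ρ h h2))
        · exact Or.inr h2
        · exact absurd hFρ (ne_of_lt (hFneg2 ρ h2))
    · rintro (h | h) <;> rw [h]
      · exact ⟨one_pos, (heq_iff 1 one_pos).mpr hF1⟩
      · exact ⟨hρhat0, (heq_iff ρhat hρhat0).mpr hFρhat⟩
  · intro ρ h1ρ hρρhat
    exact (hlt_iff ρ (by linarith)).mpr (hFpos ρ h1ρ hρρhat)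
  · intro ρ h
    have hρ0 : (0:ℝ) < ρ := by linarith
    have hF := hFneg2 ρ h
    rw [hFeq ρ hρ0] at hF
    have : Hfun κ c ρ < Real.log ρ := by linarith
    calc Real.exp (Hfun κ c ρ) < Real.exp (Real.log ρ) := Real.exp_lt_exp.mpr this
      _ = ρ := Real.exp_log hρ0
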